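/- Let (ũ, Ṽ) be the extremal pair of Theorem (case 1 < p < ∞), i.e. ũ ≥ 0 minimizes J with L ũ + Ṽ ũ = λ₁(Ṽ) ũ and Ṽ = A‖ũ²‖_q^{1-q} ũ^{2(q-1)}. Then ‖ũ‖_∞ ≤ (λ₁(Ṽ)/A)^{(p-1)/2} ‖ũ‖_{2q} < ∞ and ‖Ṽ‖_∞ ≤ λ₁(Ṽ). -/

import Mathlib

open MeasureTheory Filter Topology ENNReal

/-- An abstract Dirichlet form `(a, D[a])` on `L²(X, m)`: a symmetric, non-negative
bilinear form defined on a (dense) subspace of `L²`, satisfying the Markov property. -/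
structure DirichletForm (X : Type) [MeasurableSpace X] (μ : Measure X) where
  dom : Set (X → ℝ)
  form : (X → ℝ) → (X → ℝ) → ℝ
  zero_mem : (0 : X → ℝ) ∈ dom
  dom_add : ∀ u ∈ dom, ∀ v ∈ dom, u + v ∈ dom
  dom_smul : ∀ (c : ℝ), ∀ u ∈ dom, c • u ∈ dom
  memL2 : ∀ u ∈ dom, MemLp u 2 μ
  symm : ∀ u v, form u v = form v u
  add_left : ∀ u v w, form (u + v) w = form u w + form v w
  smul_left : ∀ (c : ℝ) (u v), form (c • u) v = c * form u v
  nonneg : ∀ u, 0 ≤ form u u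
  markov : ∀ u ∈ dom, (fun x => min 1 (max (u x) 0)) ∈ dom ∧
    form (fun x => min 1 (max (u x) 0)) (fun x => min 1 (max (u x) 0)) ≤ form u u

/-! Write `N = ‖ũ‖_{2q}` and `c = (λ/A)^{(p-1)/2} N`. Since `(p-1)(q-1) = 1`, `c` is exactly the
level at which the potential `Ṽ = A N^{2(1-q)} ũ^{2(q-1)}` equals `λ`. Test the eigen-equation
with the excess `ξ = ũ - min(ũ, c)`, which lies in `D[a]` by the Markov property. The Markov
property also gives `a(ũ, ξ) ≥ 0`: cutting `min(ũ, c) + s ξ` off at `c` returns `min(ũ, c)`, so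
`s ↦ a[min(ũ, c) + s ξ]` is minimal at `s = 0`. Hence `∫ (Ṽ - λ) ũ ξ ≤ 0`, while the integrand is
nonnegative and positive where `ũ > c`; so `ũ ≤ c` a.e., and then `Ṽ ≤ λ`. -/

section Cutoff

variable {X : Type}

def cutoff (c : ℝ) (v : X → ℝ) : X → ℝ := fun x => min c (max (v x) 0)

lemma cutoff_eq_smul_cutoff_one {c : ℝ} (hc : 0 < c) (v : X → ℝ) :
    cutoff c v = c • cutoff 1 (c⁻¹ • v) := by
  funext x
  simp only [cutoff, Pi.smul_apply, smul_eq_mul]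
  rw [mul_min_of_nonneg _ _ hc.le, mul_max_of_nonneg _ _ hc.le, mul_inv_cancel_left₀ hc.ne']
  simp

lemma cutoff_add_smul_sub_cutoff {c s : ℝ} (hc : 0 ≤ c) (hs : 0 ≤ s) (v : X → ℝ) :
    cutoff c (cutoff c v + s • (v - cutoff c v)) = cutoff c v := by
  funext x
  simp only [cutoff, Pi.add_apply, Pi.smul_apply, Pi.sub_apply, smul_eq_mul]
  rcases le_total (v x) 0 with h0 | h0
  · rw [max_eq_right h0, min_eq_right hc]
    simp only [sub_zero, zero_add]
    rw [max_eq_right (mul_nonpos_of_nonneg_of_nonpos hs h0), min_eq_right hc]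
  rcases le_total (v x) c with hc' | hc'
  · simp [max_eq_left h0, min_eq_right hc']
  · rw [max_eq_left h0, min_eq_left hc', max_eq_left (by nlinarith), min_eq_left (by nlinarith)]

lemma sub_cutoff_apply {c : ℝ} {v : X → ℝ} {x : X} (hv : 0 ≤ v x) :
    (v - cutoff c v) x = max (v x - c) 0 := by
  simp only [Pi.sub_apply, cutoff, max_eq_left hv]
  rcases le_total (v x) c with h | h <;> simp [h]

end Cutoff

section Integrals

variable {X : Type} [MeasurableSpace X] {μ : Measure X}

lemma integral_sq_pos {f : X → ℝ} (hf : MemLp f 2 μ) (h : eLpNorm f 2 μ ≠ 0) :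
    0 < ∫ x, f x ^ 2 ∂μ := by
  refine (integral_nonneg fun x => sq_nonneg (f x)).lt_of_ne' fun h0 => h ?_
  rw [eLpNorm_eq_zero_iff hf.aestronglyMeasurable two_ne_zero]
  filter_upwards [(integral_eq_zero_iff_of_nonneg (fun x => sq_nonneg (f x))
    hf.integrable_sq).1 h0] with x hx
  exact pow_eq_zero_iff two_ne_zero |>.1 hx

lemma toReal_eLpNorm_pos {f : X → ℝ} {p r : ℝ≥0∞} (hf : MemLp f p μ) (hp : p ≠ 0)
    (hr : r ≠ 0) (h : eLpNorm f r μ ≠ 0) : 0 < (eLpNorm f p μ).toReal := by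
  refine ENNReal.toReal_pos (fun h0 => h ?_) hf.eLpNorm_ne_top
  rw [eLpNorm_eq_zero_iff hf.aestronglyMeasurable hr]
  exact (eLpNorm_eq_zero_iff hf.aestronglyMeasurable hp).1 h0

lemma integrable_rpow_mul_sq {f : X → ℝ} {q : ℝ}
    (hq : 0 < q) (hf : MemLp f (ENNReal.ofReal (2 * q)) μ) (hf0 : ∀ x, 0 ≤ f x) :
    Integrable (fun x => f x ^ (2 * (q - 1)) * f x ^ 2) μ := by
  have h := hf.integrable_norm_rpow (by simpa using hq) ENNReal.ofReal_ne_top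
  rw [ENNReal.toReal_ofReal (by positivity)] at h
  refine h.congr (ae_of_all _ fun x => ?_)
  beta_reduce
  rw [Real.norm_of_nonneg (hf0 x), ← Real.rpow_two, ← Real.rpow_add' (hf0 x) (by linarith)]
  ring_nf

lemma integrable_mul_mul_of_le_sq {V u ξ : X → ℝ} (hVu : Integrable (fun x => V x * u x ^ 2) μ)
    (hm : AEStronglyMeasurable (fun x => V x * u x * ξ x) μ)
    (hξ : ∀ x, 0 ≤ u x * ξ x ∧ u x * ξ x ≤ u x ^ 2) :
    Integrable (fun x => V x * u x * ξ x) μ :=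
  hVu.mono hm (ae_of_all _ fun x => by
    rw [mul_assoc, norm_mul, Real.norm_of_nonneg (hξ x).1, norm_mul,
      Real.norm_of_nonneg (sq_nonneg _)]
    exact mul_le_mul_of_nonneg_left (hξ x).2 (norm_nonneg _))

end Integrals

namespace DirichletForm

variable {X : Type} [MeasurableSpace X] {μ : Measure X} (a : DirichletForm X μ)

lemma add_right (u v w : X → ℝ) : a.form u (v + w) = a.form u v + a.form u w := by
  rw [a.symm, a.add_left, a.symm v u, a.symm w u]

lemma smul_right (c : ℝ) (u v : X → ℝ) : a.form u (c • v) = c * a.form u v := by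
  rw [a.symm, a.smul_left, a.symm v u]

lemma sub_mem {u v : X → ℝ} (hu : u ∈ a.dom) (hv : v ∈ a.dom) : u - v ∈ a.dom := by
  simpa [sub_eq_add_neg] using a.dom_add u hu _ (a.dom_smul (-1) v hv)

lemma form_sub_left (u v w : X → ℝ) : a.form (u - v) w = a.form u w - a.form v w := by
  rw [sub_eq_add_neg, a.add_left, ← neg_one_smul ℝ v, a.smul_left]
  ring

lemma form_add_smul_self (g ξ : X → ℝ) (s : ℝ) :
    a.form (g + s • ξ) (g + s • ξ) = a.form g g + 2 * s * a.form g ξ + s ^ 2 * a.form ξ ξ := by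
  simp only [a.add_left, a.add_right, a.smul_left, a.smul_right, a.symm ξ g]
  ring

lemma cutoff_mem {c : ℝ} (hc : 0 < c) {v : X → ℝ} (hv : v ∈ a.dom) : cutoff c v ∈ a.dom := by
  rw [cutoff_eq_smul_cutoff_one hc]
  exact a.dom_smul c _ (a.markov _ (a.dom_smul c⁻¹ v hv)).1

lemma form_cutoff_le {c : ℝ} (hc : 0 < c) {v : X → ℝ} (hv : v ∈ a.dom) :
    a.form (cutoff c v) (cutoff c v) ≤ a.form v v := by
  have hle := (a.markov _ (a.dom_smul c⁻¹ v hv)).2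
  rw [a.smul_left, a.smul_right] at hle
  rw [cutoff_eq_smul_cutoff_one hc, a.smul_left, a.smul_right]
  have hc2 : c * c⁻¹ * (c * c⁻¹) = 1 := by field_simp
  calc c * (c * a.form (cutoff 1 (c⁻¹ • v)) (cutoff 1 (c⁻¹ • v)))
      ≤ c * (c * (c⁻¹ * (c⁻¹ * a.form v v))) := by gcongr; exact hle
    _ = a.form v v := by linear_combination a.form v v * hc2

lemma form_nonneg_of_forall_le {g ξ : X → ℝ}
    (h : ∀ s : ℝ, 0 < s → a.form g g ≤ a.form (g + s • ξ) (g + s • ξ)) : 0 ≤ a.form g ξ := by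
  have hslope : ∀ s > 0, 0 ≤ 2 * a.form g ξ + s * a.form ξ ξ := fun s hs => by
    have := h s hs
    rw [a.form_add_smul_self] at this
    nlinarith
  have hlim : Tendsto (fun s => 2 * a.form g ξ + s * a.form ξ ξ) (𝓝[>] 0)
      (𝓝 (2 * a.form g ξ + 0 * a.form ξ ξ)) :=
    (tendsto_const_nhds.add (tendsto_id.mul_const _)).mono_left nhdsWithin_le_nhds
  have := ge_of_tendsto hlim (eventually_nhdsWithin_of_forall hslope)
  linarith

lemma form_sub_cutoff_nonneg {c : ℝ} (hc : 0 < c) {v : X → ℝ} (hv : v ∈ a.dom) :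
    0 ≤ a.form v (v - cutoff c v) := by
  set g := cutoff c v
  have hg : g ∈ a.dom := a.cutoff_mem hc hv
  have hgξ : 0 ≤ a.form g (v - g) := a.form_nonneg_of_forall_le fun s hs => by
    have h := a.form_cutoff_le hc (a.dom_add g hg _ (a.dom_smul s _ (a.sub_mem hv hg)))
    rwa [cutoff_add_smul_sub_cutoff hc.le hs.le] at h
  have hsplit : a.form v (v - g) = a.form g (v - g) + a.form (v - g) (v - g) := by
    rw [a.form_sub_left]; ring
  rw [hsplit]
  exact add_nonneg hgξ (a.nonneg _)

theorem ae_le_of_eigen_of_lt_potential {u V : X → ℝ} {lam c : ℝ}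
    (hu : u ∈ a.dom) (hupos : ∀ x, 0 ≤ u x) (hc : 0 < c)
    (hVm : AEStronglyMeasurable V μ) (hVu : Integrable (fun x => V x * u x ^ 2) μ)
    (heig : ∀ w ∈ a.dom, a.form u w + ∫ x, V x * u x * w x ∂μ = lam * ∫ x, u x * w x ∂μ)
    (hgt : ∀ x, c < u x → lam < V x) : ∀ᵐ x ∂μ, u x ≤ c := by
  set ξ := u - cutoff c u
  have hξ : ξ ∈ a.dom := a.sub_mem hu (a.cutoff_mem hc hu)
  have hξx : ∀ x, ξ x = max (u x - c) 0 := fun x => sub_cutoff_apply (hupos x)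
  have huξ_le : ∀ x, 0 ≤ u x * ξ x ∧ u x * ξ x ≤ u x ^ 2 := fun x => by
    have := hupos x
    rw [hξx, sq]
    constructor
    · positivity
    · exact mul_le_mul_of_nonneg_left (max_le (by linarith) this) this
  have hum := (a.memL2 u hu).aestronglyMeasurable
  have hξm := (a.memL2 ξ hξ).aestronglyMeasurable
  have huξ : Integrable (fun x => u x * ξ x) μ :=
    (a.memL2 u hu).integrable_sq.mono' (hum.mul hξm) (ae_of_all _ fun x => by
      rw [Real.norm_of_nonneg (huξ_le x).1]; exact (huξ_le x).2)
  have hVuξ : Integrable (fun x => V x * u x * ξ x) μ :=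
    integrable_mul_mul_of_le_sq hVu ((hVm.mul hum).mul hξm) huξ_le
  have hpos : ∀ x, c < u x → 0 < (V x - lam) * (u x * ξ x) := fun x hx => by
    have hξpos : 0 < ξ x := by rw [hξx]; exact lt_max_of_lt_left (by linarith)
    have := hgt x hx
    have : 0 < u x := hc.trans hx
    positivity
  have hnonneg : ∀ x, 0 ≤ (V x - lam) * (u x * ξ x) := fun x => by
    rcases le_or_gt (u x) c with hx | hx
    · rw [hξx, max_eq_right (by linarith), mul_zero, mul_zero]
    · exact (hpos x hx).le
  have hexpand : (fun x => (V x - lam) * (u x * ξ x)) =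
      fun x => V x * u x * ξ x - lam * (u x * ξ x) := by
    funext x; ring
  have hint : ∫ x, (V x - lam) * (u x * ξ x) ∂μ = -a.form u ξ := by
    rw [hexpand, integral_sub hVuξ (huξ.const_mul lam), integral_const_mul]
    linarith [heig ξ hξ]
  have hzero : (fun x => (V x - lam) * (u x * ξ x)) =ᵐ[μ] 0 := by
    refine (integral_eq_zero_iff_of_nonneg (fun x => hnonneg x) ?_).1 ?_
    · rw [hexpand]; exact hVuξ.sub (huξ.const_mul lam)
    · exact le_antisymm (hint ▸ neg_nonpos.2 (a.form_sub_cutoff_nonneg hc hu))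
        (integral_nonneg fun x => hnonneg x)
  filter_upwards [hzero] with x hx
  by_contra! hgt'
  exact (hpos x hgt').ne' hx

end DirichletForm

lemma Real.HolderConjugate.rpow_threshold_eq {p q lam A N : ℝ} (hpq : p.HolderConjugate q)
    (hlam : 0 < lam) (hA : 0 < A) (hN : 0 < N) :
    A * (N ^ 2) ^ (1 - q) * ((lam / A) ^ ((p - 1) / 2) * N) ^ (2 * (q - 1)) = lam := by
  have hexp : (p - 1) / 2 * (2 * (q - 1)) = 1 := by linear_combination hpq.mul_eq_add
  have hN2 : (N ^ 2) ^ (1 - q) * N ^ (2 * (q - 1)) = 1 := by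
    rw [← Real.rpow_two, ← Real.rpow_mul hN.le, ← Real.rpow_add hN,
      show 2 * (1 - q) + 2 * (q - 1) = 0 by ring, Real.rpow_zero]
  rw [Real.mul_rpow (by positivity) hN.le, ← Real.rpow_mul (by positivity), hexp, Real.rpow_one]
  calc A * (N ^ 2) ^ (1 - q) * (lam / A * N ^ (2 * (q - 1)))
      = lam * (A / A) * ((N ^ 2) ^ (1 - q) * N ^ (2 * (q - 1))) := by ring
    _ = lam := by rw [div_self hA.ne', hN2, mul_one, mul_one]

theorem extremal_pair_linfty_bounds_general
    {X : Type} [MeasurableSpace X] (μ : Measure X) (a : DirichletForm X μ)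
    (p q : ℝ) (hpq : Real.HolderConjugate p q) (A : ℝ) (hA : 0 < A)
    (u : X → ℝ) (hu : u ∈ a.dom) (hupos : ∀ x, 0 ≤ u x)
    (huLq : MemLp u (ENNReal.ofReal (2 * q)) μ)
    (hune : eLpNorm u 2 μ ≠ 0)
    (lam : ℝ)
    (hlam : lam = (a.form u u +
      A * ((eLpNorm u (ENNReal.ofReal (2 * q)) μ).toReal) ^ 2) / (∫ x, (u x) ^ 2 ∂μ))
    -- the extremal potential `Ṽ = A ‖ũ²‖_q^{1-q} ũ^{2(q-1)}` and the eigen-equation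
    (V : X → ℝ)
    (hVdef : V = fun x =>
      A * (((eLpNorm u (ENNReal.ofReal (2 * q)) μ).toReal) ^ 2) ^ (1 - q) *
        (u x) ^ (2 * (q - 1)))
    (heig : ∀ w ∈ a.dom,
      a.form u w + ∫ x, V x * u x * w x ∂μ = lam * ∫ x, u x * w x ∂μ) :
    eLpNorm u ⊤ μ ≤
        ENNReal.ofReal ((lam / A) ^ ((p - 1) / 2) *
          (eLpNorm u (ENNReal.ofReal (2 * q)) μ).toReal) ∧
      eLpNorm V ⊤ μ ≤ ENNReal.ofReal lam := by
  have hexp : 0 < 2 * (q - 1) := by linarith [hpq.symm.lt]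
  have hum := (a.memL2 u hu).aestronglyMeasurable
  set N := (eLpNorm u (ENNReal.ofReal (2 * q)) μ).toReal
  have hN : 0 < N := toReal_eLpNorm_pos huLq (by simpa using hpq.symm.pos) two_ne_zero hune
  have hlam0 : 0 < lam := by
    rw [hlam]
    exact div_pos (add_pos_of_nonneg_of_pos (a.nonneg u) (by positivity))
      (integral_sq_pos (a.memL2 u hu) hune)
  set c := (lam / A) ^ ((p - 1) / 2) * N
  have hc : 0 < c := by positivity
  set K := A * (N ^ 2) ^ (1 - q)
  have hK : 0 < K := by positivity
  have hKc : K * c ^ (2 * (q - 1)) = lam := hpq.rpow_threshold_eq hlam0 hA hN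
  subst hVdef
  have hVm : AEStronglyMeasurable (fun x => K * u x ^ (2 * (q - 1))) μ :=
    ((Real.continuous_rpow_const hexp.le).comp_aestronglyMeasurable hum).const_mul _
  have hVu : Integrable (fun x => K * u x ^ (2 * (q - 1)) * u x ^ 2) μ := by
    simpa only [mul_assoc] using (integrable_rpow_mul_sq hpq.symm.pos huLq hupos).const_mul K
  have hbound : ∀ᵐ x ∂μ, u x ≤ c :=
    a.ae_le_of_eigen_of_lt_potential hu hupos hc hVm hVu heig fun x hx => by
      rw [← hKc]; exact mul_lt_mul_of_pos_left (Real.rpow_lt_rpow hc.le hx hexp) hK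
  simp only [eLpNorm_exponent_top]
  constructor
  · refine eLpNormEssSup_le_of_ae_bound ?_
    filter_upwards [hbound] with x hx
    rwa [Real.norm_of_nonneg (hupos x)]
  · refine eLpNormEssSup_le_of_ae_bound ?_
    filter_upwards [hbound] with x hx
    rw [Real.norm_of_nonneg (mul_nonneg hK.le (Real.rpow_nonneg (hupos x) _)), ← hKc]
    exact mul_le_mul_of_nonneg_left (Real.rpow_le_rpow (hupos x) hx hexp.le) hK.le

/-- `L^∞` bounds for the extremal pair, case `1 < p < ∞`:
`‖ũ‖_∞ ≤ (λ₁(Ṽ)/A)^{(p-1)/2} ‖ũ‖_{2q}` and `‖Ṽ‖_∞ ≤ λ₁(Ṽ)`. -/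
theorem extremal_pair_linfty_bounds
    {X : Type} [MeasurableSpace X] (μ : Measure X) (a : DirichletForm X μ)
    (p q : ℝ) (hpq : Real.HolderConjugate p q) (A : ℝ) (hA : 0 < A)
    (u : X → ℝ) (hu : u ∈ a.dom) (hupos : ∀ x, 0 ≤ u x)
    (huLq : MemLp u (ENNReal.ofReal (2 * q)) μ)
    (hune : eLpNorm u 2 μ ≠ 0)
    -- `ũ` minimizes `J`
    (hmin : ∀ v ∈ a.dom, eLpNorm v 2 μ ≠ 0 → MemLp v (ENNReal.ofReal (2 * q)) μ →
      (a.form u u + A * ((eLpNorm u (ENNReal.ofReal (2 * q)) μ).toReal) ^ 2) /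
          (∫ x, (u x) ^ 2 ∂μ) ≤
        (a.form v v + A * ((eLpNorm v (ENNReal.ofReal (2 * q)) μ).toReal) ^ 2) /
          (∫ x, (v x) ^ 2 ∂μ))
    (lam : ℝ)
    (hlam : lam = (a.form u u +
      A * ((eLpNorm u (ENNReal.ofReal (2 * q)) μ).toReal) ^ 2) / (∫ x, (u x) ^ 2 ∂μ))
    -- the extremal potential `Ṽ = A ‖ũ²‖_q^{1-q} ũ^{2(q-1)}` and the eigen-equation
    (V : X → ℝ)
    (hVdef : V = fun x =>
      A * (((eLpNorm u (ENNReal.ofReal (2 * q)) μ).toReal) ^ 2) ^ (1 - q) *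
        (u x) ^ (2 * (q - 1)))
    (heig : ∀ w ∈ a.dom,
      a.form u w + ∫ x, V x * u x * w x ∂μ = lam * ∫ x, u x * w x ∂μ) :
    eLpNorm u ⊤ μ ≤
        ENNReal.ofReal ((lam / A) ^ ((p - 1) / 2) *
          (eLpNorm u (ENNReal.ofReal (2 * q)) μ).toReal) ∧
      eLpNorm V ⊤ μ ≤ ENNReal.ofReal lam :=
  extremal_pair_linfty_bounds_general μ a p q hpq A hA u hu hupos huLq hune lam hlam V hVdef heig
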